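/- (The weak-l_p group M_p is interpolation for (l_0, l_1).) Let 0 < p < 1. Let T be a homomorphism on l_1 and M > 0 be such that ‖Tx‖₁ ≤ M‖x‖₁ for all x ∈ l_1 and card(supp Tx) ≤ M·card(supp x) for all finitely supported x. Then there exists a constant C, depending only on p and M, such that for every b ∈ l_1 with ‖b‖_{M_p} := sup_{k≥1} k^{1/p} b_k^* < ∞, one has sup_{k≥1} k^{1/p} (Tb)_k^* ≤ C · sup_{k≥1} k^{1/p} b_k^*. -/

import Mathlib

open scoped BigOperators ENNReal

noncomputable section

/-- `x ∈ ℓ¹`: the sequence is absolutely summable. -/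
def MemL1 (x : ℕ → ℝ) : Prop := Summable fun i => |x i|

/-- `‖x‖₁ = ∑ |x i|`. -/
def l1Norm (x : ℕ → ℝ) : ℝ := ∑' i, |x i|

/-- `x ∈ ℓ⁰`: the sequence is finitely supported (eventually zero). -/
def FinSupp (x : ℕ → ℝ) : Prop := {i : ℕ | x i ≠ 0}.Finite

/-- `‖x‖₀ = card (supp x)`. -/
def suppCard (x : ℕ → ℝ) : ℕ := {i : ℕ | x i ≠ 0}.ncard

/-- The nonincreasing rearrangement `u_k^* = inf {t ≥ 0 : card {i : |u i| > t} < k}`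
(meaningful for `k ≥ 1`). -/
def rearr (u : ℕ → ℝ) (k : ℕ) : ℝ :=
  sInf {t : ℝ | 0 ≤ t ∧ {i : ℕ | t < |u i|}.Finite ∧ {i : ℕ | t < |u i|}.ncard < k}

/-- The tail sum `∑_{i=k}^∞ u_i^*` of the nonincreasing rearrangement. -/
def tailSum (u : ℕ → ℝ) (k : ℕ) : ℝ := ∑' n : ℕ, rearr u (k + n)

/-- A homomorphism of the additive group of sequences. -/
def IsHom (T : (ℕ → ℝ) → ℕ → ℝ) : Prop :=
  (∀ x y, T (x + y) = T x + T y) ∧ ∀ x, T (-x) = -T x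

/-- `T` is bounded on `ℓ¹` with constant `M`. -/
def L1BddBy (T : (ℕ → ℝ) → ℕ → ℝ) (M : ℝ) : Prop :=
  ∀ x, MemL1 x → MemL1 (T x) ∧ l1Norm (T x) ≤ M * l1Norm x

/-- `T` is bounded on `ℓ⁰` with constant `M`. -/
def L0BddBy (T : (ℕ → ℝ) → ℕ → ℝ) (M : ℝ) : Prop :=
  ∀ x, FinSupp x → FinSupp (T x) ∧ (suppCard (T x) : ℝ) ≤ M * suppCard x

/-- `a ∈ Orb (b; ℓ⁰, ℓ¹)`. -/
def InOrbit (b a : ℕ → ℝ) : Prop :=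
  ∃ T M, IsHom T ∧ L1BddBy T M ∧ L0BddBy T M ∧ T b = a

/-- The orbit quasi-norm `‖a‖_{Orb(b; ℓ⁰, ℓ¹)}`: the infimum of
`max (‖T‖_{ℓ¹→ℓ¹}, ‖T‖_{ℓ⁰→ℓ⁰})` over homomorphisms `T` with `T b = a`, expressed as the
infimum of constants `M` for which some homomorphism `T` with `T b = a` is `M`-bounded on
both `ℓ⁰` and `ℓ¹`. -/
def orbNorm (b a : ℕ → ℝ) : ℝ :=
  sInf {M : ℝ | ∃ T, IsHom T ∧ L1BddBy T M ∧ L0BddBy T M ∧ T b = a}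

/-- The approximative E-functional of the pair `(ℓ⁰, ℓ¹)`. -/
def Efun (t : ℝ) (x : ℕ → ℝ) : ℝ :=
  sInf {r : ℝ | ∃ x₀, FinSupp x₀ ∧ (suppCard x₀ : ℝ) ≤ t ∧ r = l1Norm (x - x₀)}

/-- The E-orbit quasi-norm `‖x‖_{E-Orb(b; ℓ⁰, ℓ¹)}`. -/
def eOrbNorm (b x : ℕ → ℝ) : ℝ :=
  sInf {C : ℝ | 0 < C ∧ ∀ t > 0, Efun t x ≤ C * Efun (t / C) b}

/-- Peetre's K-functional of the pair `(ℓ⁰, ℓ¹)`. -/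
def Kfun (t : ℝ) (x : ℕ → ℝ) : ℝ :=
  sInf {r : ℝ | ∃ x₀ x₁, x = x₀ + x₁ ∧ FinSupp x₀ ∧ MemL1 x₁ ∧
    r = (suppCard x₀ : ℝ) + t * l1Norm x₁}

/-- The K-orbit quasi-norm `‖x‖_{K-Orb(b; ℓ⁰, ℓ¹)} = sup_{t>0} K(t,x)/K(t,b)`, expressed as
the least constant `C ≥ 0` with `K(t,x) ≤ C·K(t,b)` for all `t > 0`. -/
def kOrbNorm (b x : ℕ → ℝ) : ℝ :=
  sInf {C : ℝ | 0 ≤ C ∧ ∀ t > 0, Kfun t x ≤ C * Kfun t b}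

/-- `X` (with quasi-norm `N`) is a rearrangement invariant sequence group. -/
def IsRIGroup (X : Set (ℕ → ℝ)) (N : (ℕ → ℝ) → ℝ) : Prop :=
  (∀ x ∈ X, 0 ≤ N x) ∧
  (∀ x ∈ X, (N x = 0 ↔ x = 0)) ∧
  (∀ x ∈ X, -x ∈ X ∧ N (-x) = N x) ∧
  (∀ x ∈ X, ∀ y ∈ X, x + y ∈ X ∧ N (x + y) ≤ N x + N y) ∧
  (∀ x y, y ∈ X → (∀ k : ℕ, 1 ≤ k → rearr x k ≤ rearr y k) → x ∈ X ∧ N x ≤ N y)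

/-- `X` is an interpolation group with respect to the pair `(ℓ⁰, ℓ¹)`: every homomorphism
bounded on both `ℓ⁰` and `ℓ¹` maps `X` into `X` and is bounded on `X`. -/
def InterpGroup (X : Set (ℕ → ℝ)) (N : (ℕ → ℝ) → ℝ) : Prop :=
  ∀ T : (ℕ → ℝ) → ℕ → ℝ, IsHom T → (∃ M, L1BddBy T M ∧ L0BddBy T M) →
    (∀ x ∈ X, T x ∈ X) ∧ ∃ M' : ℝ, 0 ≤ M' ∧ ∀ x ∈ X, N (T x) ≤ M' * N x

/-- The dilation `σ_m`: each coordinate repeated `m` times (sequences indexed from 1),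
`(σ_m b)_n = b_{⌈n/m⌉}`. -/
def sigmaDil (m : ℕ) (b : ℕ → ℝ) : ℕ → ℝ := fun n => b ((n - 1) / m + 1)

/-- The dilation `σ_{1/n}`: averages over consecutive blocks of length `n`
(sequences indexed from 1). -/
def sigmaAvg (n : ℕ) (b : ℕ → ℝ) : ℕ → ℝ :=
  fun j => (n : ℝ)⁻¹ * ∑ k ∈ Finset.Icc ((j - 1) * n + 1) (j * n), b k

end

section Helpers

lemma rearr_le {u : ℕ → ℝ} {k : ℕ} {c : ℝ} (hc : 0 ≤ c)
    (hfin : {i : ℕ | c < |u i|}.Finite) (hcard : {i : ℕ | c < |u i|}.ncard < k) :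
    rearr u k ≤ c :=
  csInf_le ⟨0, fun t ht => ht.1⟩ ⟨hc, hfin, hcard⟩

lemma l1Norm_nonneg (u : ℕ → ℝ) : 0 ≤ l1Norm u :=
  tsum_nonneg fun i => abs_nonneg _

lemma rearr_set_nonempty {u : ℕ → ℝ} {k : ℕ} (hu : MemL1 u) (hk : 1 ≤ k) :
    {t : ℝ | 0 ≤ t ∧ {i : ℕ | t < |u i|}.Finite ∧ {i : ℕ | t < |u i|}.ncard < k}.Nonempty := by
  refine ⟨l1Norm u, l1Norm_nonneg u, ?_, ?_⟩
  · have : {i : ℕ | l1Norm u < |u i|} = ∅ := by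
      ext i
      simp only [Set.mem_setOf_eq, Set.mem_empty_iff_false, iff_false, not_lt]
      exact Summable.le_tsum hu i fun _ _ => abs_nonneg _
    rw [this]; exact Set.finite_empty
  · have : {i : ℕ | l1Norm u < |u i|} = ∅ := by
      ext i
      simp only [Set.mem_setOf_eq, Set.mem_empty_iff_false, iff_false, not_lt]
      exact Summable.le_tsum hu i fun _ _ => abs_nonneg _
    rw [this]; simpa using (show 0 < k by omega)

lemma rearr_nonneg {u : ℕ → ℝ} {k : ℕ} (hu : MemL1 u) (hk : 1 ≤ k) : 0 ≤ rearr u k :=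
  le_csInf (rearr_set_nonempty hu hk) fun _ ht => ht.1

lemma rearr_lt_count {u : ℕ → ℝ} {k : ℕ} {s : ℝ} (hu : MemL1 u) (hk : 1 ≤ k)
    (h : rearr u k < s) :
    {i : ℕ | s < |u i|}.Finite ∧ {i : ℕ | s < |u i|}.ncard < k := by
  obtain ⟨t, ⟨ht0, htf, htc⟩, hts⟩ := exists_lt_of_csInf_lt (rearr_set_nonempty hu hk) h
  have hsub : {i : ℕ | s < |u i|} ⊆ {i : ℕ | t < |u i|} := fun i hi => lt_trans hts hi
  exact ⟨htf.subset hsub, lt_of_le_of_lt (Set.ncard_le_ncard hsub htf) htc⟩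

end Helpers
section Tail

open ENNReal in
lemma geom_tail (a : ℝ) (ha : 0 ≤ a) :
    (∑' n : ℕ, ENNReal.ofReal (a * 2⁻¹ ^ n)) = ENNReal.ofReal (2 * a) := by
  have h1 : ∀ n : ℕ, ENNReal.ofReal (a * 2⁻¹ ^ n)
      = ENNReal.ofReal a * (ENNReal.ofReal 2⁻¹) ^ n := by
    intro n
    rw [ENNReal.ofReal_mul ha, ENNReal.ofReal_pow (by norm_num)]
  simp_rw [h1]
  rw [ENNReal.tsum_mul_left, ENNReal.tsum_geometric]
  have h2 : (ENNReal.ofReal 2⁻¹) = 2⁻¹ := by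
    rw [ENNReal.ofReal_inv_of_pos (by norm_num)]
    norm_num
  rw [h2]
  have h3 : (1 : ℝ≥0∞) - 2⁻¹ = 2⁻¹ := by
    rw [← ENNReal.inv_two_add_inv_two, ENNReal.add_sub_cancel_right (by simp)]
  rw [h3, inv_inv, mul_comm, ← ENNReal.ofReal_ofNat 2, ← ENNReal.ofReal_mul (by norm_num)]

end Tail
section PW

lemma pointwise_dyadic {τ x : ℝ} (hτ : 0 < τ) (hx0 : 0 ≤ x) (hxτ : x ≤ τ) :
    ENNReal.ofReal x ≤
      ∑' j : ℕ, if τ * 2⁻¹ ^ (j + 1) < x then ENNReal.ofReal (τ * 2⁻¹ ^ (j + 1)) else 0 := by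
  rcases eq_or_lt_of_le hx0 with h0 | hxpos
  · simp [← h0]
  · have hex : ∃ j : ℕ, τ * 2⁻¹ ^ (j + 1) < x := by
      obtain ⟨n, hn⟩ := exists_pow_lt_of_lt_one (div_pos hxpos hτ) (by norm_num : (2⁻¹ : ℝ) < 1)
      refine ⟨n, ?_⟩
      have h1 : (2⁻¹ : ℝ) ^ (n + 1) ≤ 2⁻¹ ^ n :=
        pow_le_pow_of_le_one (by norm_num) (by norm_num) (Nat.le_succ n)
      have := mul_lt_mul_of_pos_left hn hτ
      rw [mul_div_cancel₀ x hτ.ne'] at this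
      exact lt_of_le_of_lt (mul_le_mul_of_nonneg_left h1 hτ.le) this
    classical
    set J := Nat.find hex with hJdef
    have hJ : τ * 2⁻¹ ^ (J + 1) < x := Nat.find_spec hex
    have hxle : x ≤ τ * 2⁻¹ ^ J := by
      rcases Nat.eq_zero_or_pos J with h | h
      · rw [h]; simpa using hxτ
      · have := Nat.find_min hex (m := J - 1) (by omega)
        have hJ1 : J - 1 + 1 = J := by omega
        rw [hJ1] at this
        exact le_of_not_gt this
    have key : ENNReal.ofReal x ≤
        ∑' n : ℕ, if τ * 2⁻¹ ^ (J + n + 1) < x then ENNReal.ofReal (τ * 2⁻¹ ^ (J + n + 1)) else 0 := by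
      have hall : ∀ n : ℕ, τ * 2⁻¹ ^ (J + n + 1) < x := by
        intro n
        have h1 : (2⁻¹ : ℝ) ^ (J + n + 1) ≤ 2⁻¹ ^ (J + 1) :=
          pow_le_pow_of_le_one (by norm_num) (by norm_num) (by omega)
        exact lt_of_le_of_lt (mul_le_mul_of_nonneg_left h1 hτ.le) hJ
      have heq : ∀ n : ℕ,
          (if τ * 2⁻¹ ^ (J + n + 1) < x then ENNReal.ofReal (τ * 2⁻¹ ^ (J + n + 1)) else 0)
            = ENNReal.ofReal ((τ * 2⁻¹ ^ (J + 1)) * 2⁻¹ ^ n) := by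
        intro n
        rw [if_pos (hall n)]
        congr 1
        rw [mul_assoc, ← pow_add]
        congr 2
        omega
      simp_rw [heq]
      rw [geom_tail _ (by positivity)]
      apply ENNReal.ofReal_le_ofReal
      calc x ≤ τ * 2⁻¹ ^ J := hxle
        _ = 2 * (τ * 2⁻¹ ^ (J + 1)) := by ring
    refine key.trans ?_
    have hinj : Function.Injective (fun n : ℕ => J + n) := add_right_injective J
    exact ENNReal.tsum_comp_le_tsum_of_injective hinj
      (fun j => if τ * 2⁻¹ ^ (j + 1) < x then ENNReal.ofReal (τ * 2⁻¹ ^ (j + 1)) else 0)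

end PW
section TB

lemma dyadic_rpow {p : ℝ} (j : ℕ) :
    ((2 : ℝ)⁻¹ ^ (j + 1)) ^ (1 - p) = ((2:ℝ) ^ (p - 1)) ^ (j + 1) := by
  have h1 : ((2:ℝ)⁻¹ ^ (j + 1)) = (2:ℝ)⁻¹ ^ (((j:ℝ) + 1)) := by
    rw [← Real.rpow_natCast (2:ℝ)⁻¹ (j+1)]
    norm_num
  rw [h1, ← Real.rpow_natCast ((2:ℝ) ^ (p-1)) (j+1), ← Real.rpow_mul (by norm_num : (0:ℝ) ≤ 2)]
  rw [← Real.rpow_neg_one (2:ℝ), ← Real.rpow_mul (by norm_num : (0:ℝ) ≤ 2),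
    ← Real.rpow_mul (by norm_num : (0:ℝ) ≤ 2)]
  congr 1
  push_cast
  ring

lemma level_eq {p N τ : ℝ} (hp0 : 0 < p) (hN : 0 ≤ N) (hτ : 0 < τ) (j : ℕ) :
    (N / (τ * 2⁻¹ ^ (j + 1))) ^ p * (τ * 2⁻¹ ^ (j + 1))
      = N ^ p * τ ^ (1 - p) * ((2:ℝ) ^ (p - 1) * ((2:ℝ) ^ (p - 1)) ^ j) := by
  have hs0 : (0:ℝ) < τ * 2⁻¹ ^ (j + 1) := by positivity
  have h1 : (N / (τ * 2⁻¹ ^ (j + 1))) ^ p * (τ * 2⁻¹ ^ (j + 1))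
      = N ^ p * (τ * 2⁻¹ ^ (j + 1)) ^ (1 - p) := by
    rw [Real.div_rpow hN hs0.le, Real.rpow_sub hs0, Real.rpow_one]
    field_simp
  rw [h1, Real.mul_rpow hτ.le (by positivity), dyadic_rpow, pow_succ]
  ring

lemma tail_bound {p N τ : ℝ} (hp0 : 0 < p) (hp1 : p < 1) (hN : 0 ≤ N) (hτ : 0 < τ)
    {v : ℕ → ℝ} (hv : Summable fun i => |v i|) (hvτ : ∀ i, |v i| ≤ τ)
    (hcount : ∀ s : ℝ, 0 < s → {i : ℕ | s < |v i|}.Finite ∧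
        (({i : ℕ | s < |v i|}.ncard : ℝ) ≤ (N / s) ^ p)) :
    (∑' i, |v i|) ≤ ((2:ℝ) ^ (p-1) / (1 - (2:ℝ) ^ (p-1))) * (N ^ p * τ ^ (1-p)) := by
  classical
  set r : ℝ := (2:ℝ) ^ (p - 1) with hrdef
  have hr0 : 0 < r := Real.rpow_pos_of_pos (by norm_num) _
  have hr1 : r < 1 := Real.rpow_lt_one_of_one_lt_of_neg (by norm_num) (by linarith)
  set X : ℝ := r / (1 - r) * (N ^ p * τ ^ (1 - p)) with hXdef
  have hX0 : 0 ≤ X := by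
    apply mul_nonneg (div_nonneg hr0.le (by linarith)) (mul_nonneg ?_ ?_)
    · exact Real.rpow_nonneg hN _
    · exact Real.rpow_nonneg hτ.le _
  rw [← ENNReal.ofReal_le_ofReal_iff hX0,
    ENNReal.ofReal_tsum_of_nonneg (fun i => abs_nonneg _) hv]
  have step1 : (∑' i, ENNReal.ofReal |v i|) ≤
      ∑' i : ℕ, ∑' j : ℕ,
        (if τ * 2⁻¹ ^ (j + 1) < |v i| then ENNReal.ofReal (τ * 2⁻¹ ^ (j + 1)) else 0) :=
    Summable.tsum_le_tsum (fun i => pointwise_dyadic hτ (abs_nonneg _) (hvτ i))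
      ENNReal.summable ENNReal.summable
  refine step1.trans ?_
  rw [ENNReal.tsum_comm]
  have step2 : ∀ j : ℕ,
      (∑' i : ℕ, (if τ * 2⁻¹ ^ (j + 1) < |v i| then ENNReal.ofReal (τ * 2⁻¹ ^ (j + 1)) else 0))
        ≤ ENNReal.ofReal ((N ^ p * τ ^ (1 - p)) * (r * r ^ j)) := by
    intro j
    set s : ℝ := τ * 2⁻¹ ^ (j + 1) with hsdef
    have hs0 : 0 < s := by positivity
    obtain ⟨hfin, hcard⟩ := hcount s hs0
    rw [tsum_eq_sum (s := hfin.toFinset) (fun i hi => by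
      rw [if_neg]; intro hlt; exact hi (hfin.mem_toFinset.mpr hlt))]
    have hb : ∀ i ∈ hfin.toFinset,
        (if s < |v i| then ENNReal.ofReal s else 0) ≤ ENNReal.ofReal s := by
      intro i _; split <;> simp
    calc (∑ i ∈ hfin.toFinset, if s < |v i| then ENNReal.ofReal s else 0)
        ≤ hfin.toFinset.card • ENNReal.ofReal s := Finset.sum_le_card_nsmul _ _ _ hb
      _ = (hfin.toFinset.card : ℝ≥0∞) * ENNReal.ofReal s := nsmul_eq_mul _ _
      _ = ENNReal.ofReal (hfin.toFinset.card : ℝ) * ENNReal.ofReal s := by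
          rw [ENNReal.ofReal_natCast]
      _ ≤ ENNReal.ofReal ((N / s) ^ p) * ENNReal.ofReal s := by
          apply mul_le_mul_left
          apply ENNReal.ofReal_le_ofReal
          rwa [Set.ncard_eq_toFinset_card _ hfin] at hcard
      _ = ENNReal.ofReal ((N / s) ^ p * s) := (ENNReal.ofReal_mul (by positivity)).symm
      _ = ENNReal.ofReal ((N ^ p * τ ^ (1 - p)) * (r * r ^ j)) := by
          rw [hsdef, level_eq hp0 hN hτ j]
  refine (Summable.tsum_le_tsum step2 ENNReal.summable ENNReal.summable).trans ?_
  have heq : ∀ j : ℕ, ENNReal.ofReal ((N ^ p * τ ^ (1 - p)) * (r * r ^ j))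
      = ENNReal.ofReal ((N ^ p * τ ^ (1 - p)) * r) * (ENNReal.ofReal r) ^ j := by
    intro j
    rw [← ENNReal.ofReal_pow hr0.le, ← ENNReal.ofReal_mul (by positivity)]
    ring_nf
  simp_rw [heq]
  rw [ENNReal.tsum_mul_left, ENNReal.tsum_geometric]
  have h1r : (1 : ℝ≥0∞) - ENNReal.ofReal r = ENNReal.ofReal (1 - r) := by
    rw [ENNReal.ofReal_sub _ hr0.le, ENNReal.ofReal_one]
  rw [h1r, ← ENNReal.ofReal_inv_of_pos (by linarith), ← ENNReal.ofReal_mul (by positivity)]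
  apply ENNReal.ofReal_le_ofReal
  apply le_of_eq
  rw [hXdef]
  ring

end TB
section Alg

lemma exp_eq {p A κ N : ℝ} (hp0 : 0 < p) (hA : 0 < A) (hκ : 0 < κ) (hN : 0 < N) :
    κ ^ (1/p) * (N ^ p * (N * (A / κ) ^ (1/p)) ^ (1 - p)) / κ = N * A ^ ((1-p)/p) := by
  have hAκ : 0 < A / κ := div_pos hA hκ
  have h1 : (N * (A/κ) ^ (1/p)) ^ (1-p) = N ^ (1-p) * (A/κ) ^ ((1-p)/p) := by
    rw [Real.mul_rpow hN.le (Real.rpow_nonneg hAκ.le _), ← Real.rpow_mul hAκ.le]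
    congr 2
    field_simp
  have h2 : N ^ p * N ^ (1-p) = N := by
    rw [← Real.rpow_add hN]; norm_num
  have h3 : (A/κ) ^ ((1-p)/p) = A ^ ((1-p)/p) * κ ^ (-((1-p)/p)) := by
    rw [Real.div_rpow hA.le hκ.le, Real.rpow_neg hκ.le, div_eq_mul_inv]
  have h4 : κ ^ (1/p) * κ ^ (-((1-p)/p)) = κ := by
    rw [← Real.rpow_add hκ]
    rw [show 1/p + -((1-p)/p) = 1 by field_simp; ring]
    exact Real.rpow_one κ
  calc κ ^ (1/p) * (N ^ p * (N * (A / κ) ^ (1/p)) ^ (1 - p)) / κ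
      = (N ^ p * N ^ (1-p)) * A ^ ((1-p)/p) * (κ ^ (1/p) * κ ^ (-((1-p)/p))) / κ := by
        rw [h1, h3]; ring
    _ = N * A ^ ((1-p)/p) * κ / κ := by rw [h2, h4]
    _ = N * A ^ ((1-p)/p) := by field_simp

end Alg

/-- the weak-`ℓ^p` group `M_p`, `0 < p < 1`, with quasi-norm
`‖x‖_{M_p} = sup_{k≥1} k^{1/p}·x_k^*`, is an interpolation group for `(ℓ⁰, ℓ¹)`: there is
a constant `C` depending only on `p, M` such that every homomorphism `T` bounded by `M` on
both `ℓ⁰` and `ℓ¹` satisfies `‖T b‖_{M_p} ≤ C·‖b‖_{M_p}` for all `b ∈ ℓ¹` with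
`‖b‖_{M_p} < ∞`. -/
theorem weak_lp_interpolation (p M : ℝ) (hp0 : 0 < p) (hp1 : p < 1) (hM : 0 < M) :
    ∃ C : ℝ, 0 < C ∧
      ∀ T : (ℕ → ℝ) → ℕ → ℝ, IsHom T → L1BddBy T M → L0BddBy T M →
        ∀ b : ℕ → ℝ, MemL1 b →
          (⨆ k : {k : ℕ // 1 ≤ k}, ENNReal.ofReal ((k.1 : ℝ) ^ (1 / p) * rearr b k.1)) ≠ ⊤ →
          (⨆ k : {k : ℕ // 1 ≤ k},
              ENNReal.ofReal ((k.1 : ℝ) ^ (1 / p) * rearr (T b) k.1)) ≤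
            ENNReal.ofReal C *
              ⨆ k : {k : ℕ // 1 ≤ k}, ENNReal.ofReal ((k.1 : ℝ) ^ (1 / p) * rearr b k.1)
    := by
  classical
  have hr0 : (0:ℝ) < (2:ℝ) ^ (p - 1) := Real.rpow_pos_of_pos (by norm_num) _
  have hr1 : (2:ℝ) ^ (p - 1) < 1 :=
    Real.rpow_lt_one_of_one_lt_of_neg (by norm_num) (by linarith)
  set cp : ℝ := (2:ℝ) ^ (p-1) / (1 - (2:ℝ) ^ (p-1)) with hcpdef
  have hcp0 : 0 < cp := div_pos hr0 (by linarith)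
  set M' : ℝ := max M 1 with hM'def
  have hM'1 : (1:ℝ) ≤ M' := le_max_right _ _
  have hM'0 : (0:ℝ) < M' := lt_of_lt_of_le one_pos hM'1
  have hMM' : M ≤ M' := le_max_left _ _
  set C : ℝ := 2 * M * cp * (4 * M') ^ ((1 - p)/p) + 1 with hCdef
  have h4M' : (0:ℝ) < 4 * M' := by linarith
  have hC0 : 0 < C := by
    have h1 : (0:ℝ) < (4 * M') ^ ((1 - p)/p) := Real.rpow_pos_of_pos h4M' _
    have h2 : 0 < 2 * M * cp * (4 * M') ^ ((1 - p)/p) := by positivity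
    rw [hCdef]; linarith
  refine ⟨C, hC0, ?_⟩
  intro T hT hT1 hT0 b hb htop
  have hT00 : T 0 = 0 := by
    have h := hT.1 0 0
    simp only [add_zero] at h
    exact (add_eq_left.mp h.symm)
  set S := (⨆ k : {k : ℕ // 1 ≤ k}, ENNReal.ofReal ((k.1 : ℝ) ^ (1 / p) * rearr b k.1))
    with hSdef
  set N : ℝ := S.toReal with hNdef
  have hSN : S = ENNReal.ofReal N := (ENNReal.ofReal_toReal htop).symm
  have hN0 : 0 ≤ N := ENNReal.toReal_nonneg
  have hbN : ∀ k : ℕ, 1 ≤ k → rearr b k ≤ N / (k:ℝ) ^ (1/p) := by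
    intro k hk
    have hkpos : (0:ℝ) < (k:ℝ) ^ (1/p) := by
      have : (0:ℝ) < (k:ℝ) := by exact_mod_cast hk
      positivity
    have h1 : ENNReal.ofReal ((k:ℝ) ^ (1/p) * rearr b k) ≤ S := by
      rw [hSdef]
      exact le_iSup (fun kk : {k : ℕ // 1 ≤ k} =>
        ENNReal.ofReal ((kk.1 : ℝ) ^ (1 / p) * rearr b kk.1)) ⟨k, hk⟩
    rw [hSN] at h1
    have h2 : (k:ℝ) ^ (1/p) * rearr b k ≤ N := by
      by_contra hcon
      push_neg at hcon
      have h3 := (ENNReal.ofReal_le_ofReal_iff hN0).mp h1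
      linarith
    rw [le_div_iff₀ hkpos, mul_comm]
    exact h2
  rcases eq_or_lt_of_le hN0 with hNzero | hNpos
  · -- N = 0 : b = 0
    have hb0 : b = 0 := by
      funext i
      have habs : ∀ s : ℝ, 0 < s → |b i| ≤ s := by
        intro s hs
        have h1 : rearr b 1 ≤ 0 := by
          have := hbN 1 le_rfl
          simpa [← hNzero] using this
        obtain ⟨hf, hc⟩ := rearr_lt_count hb le_rfl (lt_of_le_of_lt h1 hs)
        have hempty : {j : ℕ | s < |b j|} = ∅ := by
          rw [← Set.ncard_eq_zero hf]
          omega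
        have h5 : i ∉ {j : ℕ | s < |b j|} := by rw [hempty]; exact Set.notMem_empty i
        simpa using not_lt.mp h5
      have h6 : |b i| ≤ 0 := le_of_forall_gt_imp_ge_of_dense (fun s hs => habs s hs)
      simp only [Pi.zero_apply]
      exact abs_eq_zero.mp (le_antisymm h6 (abs_nonneg _))
    apply iSup_le
    rintro ⟨k, hk⟩
    have hzero : rearr (T b) k ≤ 0 := by
      rw [hb0, hT00]
      have h1 : {i : ℕ | (0:ℝ) < |(0 : ℕ → ℝ) i|} = ∅ := by simp
      exact rearr_le le_rfl (by rw [h1]; exact Set.finite_empty) (by rw [h1]; simpa using (show 0 < k by omega))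
    have hkq : (0:ℝ) ≤ (k:ℝ) ^ (1/p) := Real.rpow_nonneg (Nat.cast_nonneg k) _
    have : ENNReal.ofReal ((k:ℝ) ^ (1/p) * rearr (T b) k) = 0 :=
      ENNReal.ofReal_eq_zero.mpr (mul_nonpos_of_nonneg_of_nonpos hkq hzero)
    rw [this]
    exact bot_le
  · -- main case N > 0
    apply iSup_le
    rintro ⟨k, hk⟩
    simp only
    rw [hSN, ← ENNReal.ofReal_mul hC0.le]
    apply ENNReal.ofReal_le_ofReal
    set κ : ℝ := (k : ℝ) with hκdef
    have hκ1 : (1:ℝ) ≤ κ := by rw [hκdef]; exact_mod_cast hk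
    have hκ0 : (0:ℝ) < κ := lt_of_lt_of_le one_pos hκ1
    set τ : ℝ := N * (4 * M' / κ) ^ (1/p) with hτdef
    have h4κ : (0:ℝ) < 4 * M' / κ := div_pos h4M' hκ0
    have hτ0 : 0 < τ := by
      have h1 := Real.rpow_pos_of_pos h4κ (1/p)
      rw [hτdef]; positivity
    -- count bound for b
    have hcountb : ∀ s : ℝ, 0 < s → {i : ℕ | s < |b i|}.Finite ∧
        (({i : ℕ | s < |b i|}.ncard : ℝ) ≤ (N / s) ^ p) := by
      intro s hs
      set k₀ : ℕ := Nat.floor ((N/s) ^ p) + 1 with hk₀def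
      have hk₀1 : 1 ≤ k₀ := Nat.le_add_left 1 _
      have hlt : (N/s) ^ p < (k₀ : ℝ) := by
        rw [hk₀def]
        push_cast
        exact Nat.lt_floor_add_one _
      have hrlt : rearr b k₀ < s := by
        refine lt_of_le_of_lt (hbN k₀ hk₀1) ?_
        have hk₀pos : (0:ℝ) < (k₀:ℝ) ^ (1/p) := by
          have h0 : (0:ℝ) < (k₀:ℝ) := by exact_mod_cast hk₀1
          positivity
        rw [div_lt_iff₀ hk₀pos]
        have h1 : ((N/s) ^ p) ^ (1/p) < ((k₀:ℝ)) ^ (1/p) :=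
          Real.rpow_lt_rpow (Real.rpow_nonneg (by positivity) _) hlt (by positivity)
        rw [← Real.rpow_mul (by positivity : (0:ℝ) ≤ N/s),
          mul_one_div_cancel hp0.ne', Real.rpow_one] at h1
        calc N = (N/s) * s := by field_simp
          _ < (k₀:ℝ) ^ (1/p) * s := mul_lt_mul_of_pos_right h1 hs
          _ = s * (k₀:ℝ) ^ (1/p) := mul_comm _ _
      obtain ⟨hf, hc⟩ := rearr_lt_count hb hk₀1 hrlt
      refine ⟨hf, ?_⟩
      have h2 : {i : ℕ | s < |b i|}.ncard ≤ Nat.floor ((N/s) ^ p) := by omega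
      calc ({i : ℕ | s < |b i|}.ncard : ℝ) ≤ (Nat.floor ((N/s) ^ p) : ℝ) := by exact_mod_cast h2
        _ ≤ (N/s) ^ p := Nat.floor_le (by positivity)
    -- the set A of large coordinates of b
    obtain ⟨hAfin, hAcard⟩ := hcountb τ hτ0
    have hNτ : (N / τ) ^ p = κ / (4 * M') := by
      have h1 : N / τ = ((4 * M' / κ) ^ (1/p))⁻¹ := by
        rw [hτdef, ← div_div, div_self hNpos.ne', one_div]
      rw [h1, ← Real.rpow_neg_one ((4 * M' / κ) ^ (1/p)),
        ← Real.rpow_mul h4κ.le, ← Real.rpow_mul h4κ.le]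
      rw [show 1/p * -1 * p = -1 by field_simp]
      rw [Real.rpow_neg_one, inv_div]
    have hAcard' : (({i : ℕ | τ < |b i|}.ncard : ℝ)) ≤ κ / (4 * M') := by
      rw [← hNτ]; exact hAcard
    -- split b = b' + v
    set b' : ℕ → ℝ := fun i => if τ < |b i| then b i else 0 with hb'def
    set v : ℕ → ℝ := fun i => if τ < |b i| then 0 else b i with hvdef
    have hsplit : b = b' + v := by
      funext i
      simp only [Pi.add_apply, hb'def, hvdef]
      by_cases h : τ < |b i| <;> simp [h]
    have hb'supp : {i : ℕ | b' i ≠ 0} ⊆ {i : ℕ | τ < |b i|} := by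
      intro i hi
      simp only [hb'def, Set.mem_setOf_eq] at hi ⊢
      by_contra h
      exact hi (if_neg h)
    have hb'fin : FinSupp b' := hAfin.subset hb'supp
    obtain ⟨hTb'fin, hTb'card⟩ := hT0 b' hb'fin
    have hsuppb' : (suppCard b' : ℝ) ≤ κ / (4 * M') := by
      have h1 : suppCard b' ≤ {i : ℕ | τ < |b i|}.ncard :=
        Set.ncard_le_ncard hb'supp hAfin
      exact le_trans (by exact_mod_cast h1) hAcard'
    have hTb'bound : (suppCard (T b') : ℝ) ≤ κ / 4 := by
      refine hTb'card.trans ?_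
      calc M * (suppCard b' : ℝ) ≤ M' * (κ / (4 * M')) :=
            mul_le_mul hMM' hsuppb' (Nat.cast_nonneg _) hM'0.le
        _ = κ / 4 := by field_simp
    -- v facts
    have hvb : ∀ i, |v i| ≤ |b i| := by
      intro i
      simp only [hvdef]
      split
      · simp
      · exact le_refl _
    have hvτ : ∀ i, |v i| ≤ τ := by
      intro i
      simp only [hvdef]
      split
      · simpa using hτ0.le
      · next h => exact not_lt.mp h
    have hvL1 : MemL1 v := Summable.of_nonneg_of_le (fun i => abs_nonneg _) hvb hb
    have hcountv : ∀ s : ℝ, 0 < s → {i : ℕ | s < |v i|}.Finite ∧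
        (({i : ℕ | s < |v i|}.ncard : ℝ) ≤ (N / s) ^ p) := by
      intro s hs
      obtain ⟨hf, hc⟩ := hcountb s hs
      have hsub : {i : ℕ | s < |v i|} ⊆ {i : ℕ | s < |b i|} :=
        fun i hi => lt_of_lt_of_le hi (hvb i)
      refine ⟨hf.subset hsub, le_trans ?_ hc⟩
      exact_mod_cast Set.ncard_le_ncard hsub hf
    have htail : l1Norm v ≤ cp * (N ^ p * τ ^ (1-p)) := by
      have := tail_bound hp0 hp1 hN0 hτ0 hvL1 hvτ hcountv
      rw [← hcpdef] at this
      exact this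
    obtain ⟨hTvL1, hTvbound⟩ := hT1 v hvL1
    have hTbsplit : T b = T b' + T v := by
      have h := hT.1 b' v
      rw [← hsplit] at h
      exact h
    -- the key estimate
    have hL0 : 0 ≤ l1Norm (T v) := l1Norm_nonneg _
    have key : rearr (T b) k ≤ 2 * l1Norm (T v) / κ := by
      apply le_of_forall_gt_imp_ge_of_dense
      intro c hc
      have hc0 : 0 < c := lt_of_le_of_lt (by positivity) hc
      set B : Set ℕ := {i : ℕ | c < |T v i|} with hBdef
      have hBfin : B.Finite := by
        have hten : Filter.Tendsto (fun i => |T v i|) Filter.cofinite (nhds 0) :=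
          hTvL1.tendsto_cofinite_zero
        have hev : ∀ᶠ i in Filter.cofinite, |T v i| < c :=
          hten.eventually (gt_mem_nhds hc0)
        refine (Filter.eventually_cofinite.mp hev).subset ?_
        intro i hi
        exact not_lt.mpr hi.le
      have hBcard : (B.ncard : ℝ) * c ≤ l1Norm (T v) := by
        rw [Set.ncard_eq_toFinset_card _ hBfin]
        have h1 : ∀ i ∈ hBfin.toFinset, c ≤ |T v i| :=
          fun i hi => (hBfin.mem_toFinset.mp hi).le
        have h2 := Finset.card_nsmul_le_sum hBfin.toFinset (fun i => |T v i|) c h1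
        rw [nsmul_eq_mul] at h2
        exact h2.trans (Summable.sum_le_tsum _ (fun i _ => abs_nonneg _) hTvL1)
      have hBhalf : (B.ncard : ℝ) ≤ κ / 2 := by
        have h3 : l1Norm (T v) ≤ (κ/2) * c := by
          have h4 : (κ/2) * (2 * l1Norm (T v) / κ) = l1Norm (T v) := by
            field_simp
          calc l1Norm (T v) = (κ/2) * (2 * l1Norm (T v) / κ) := h4.symm
            _ ≤ (κ/2) * c := mul_le_mul_of_nonneg_left hc.le (by positivity)
        have h5 : (B.ncard : ℝ) * c ≤ (κ/2) * c := hBcard.trans h3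
        exact le_of_mul_le_mul_right h5 hc0
      have hUsub : {i : ℕ | c < |T b i|} ⊆ {i : ℕ | T b' i ≠ 0} ∪ B := by
        intro i hi
        simp only [Set.mem_setOf_eq] at hi
        by_contra h
        simp only [Set.mem_union, Set.mem_setOf_eq, hBdef] at h
        push_neg at h
        obtain ⟨h6, h7⟩ := h
        have h8 : T b i = T b' i + T v i := congrFun hTbsplit i
        rw [h8, h6, zero_add] at hi
        exact absurd hi (not_lt.mpr h7)
      have hUfin : {i : ℕ | c < |T b i|}.Finite := (hTb'fin.union hBfin).subset hUsub
      have hUcard : {i : ℕ | c < |T b i|}.ncard < k := by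
        have h9 : {i : ℕ | c < |T b i|}.ncard ≤ suppCard (T b') + B.ncard := by
          refine le_trans (Set.ncard_le_ncard hUsub (hTb'fin.union hBfin)) ?_
          exact Set.ncard_union_le _ _
        have h10 : ({i : ℕ | c < |T b i|}.ncard : ℝ) < κ := by
          calc ({i : ℕ | c < |T b i|}.ncard : ℝ)
              ≤ (suppCard (T b') : ℝ) + (B.ncard : ℝ) := by exact_mod_cast h9
            _ ≤ κ/4 + κ/2 := add_le_add hTb'bound hBhalf
            _ < κ := by linarith
        rw [hκdef] at h10
        exact_mod_cast h10
      exact rearr_le hc0.le hUfin hUcard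
    -- conclude
    have hl1Tv : l1Norm (T v) ≤ M * (cp * (N ^ p * τ ^ (1-p))) :=
      hTvbound.trans (mul_le_mul_of_nonneg_left htail hM.le)
    have hfin1 : rearr (T b) k ≤ 2 * (M * (cp * (N ^ p * τ ^ (1-p)))) / κ := by
      refine key.trans ?_
      gcongr
    have hkq0 : (0:ℝ) ≤ κ ^ (1/p) := Real.rpow_nonneg hκ0.le _
    have hCN : C * N = 2 * M * cp * (4 * M') ^ ((1 - p)/p) * N + N := by
      rw [hCdef]; ring
    calc (k:ℝ) ^ (1/p) * rearr (T b) k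
        = κ ^ (1/p) * rearr (T b) k := by rw [hκdef]
      _ ≤ κ ^ (1/p) * (2 * (M * (cp * (N ^ p * τ ^ (1-p)))) / κ) :=
          mul_le_mul_of_nonneg_left hfin1 hkq0
      _ = 2 * M * cp * (κ ^ (1/p) * (N ^ p * τ ^ (1-p)) / κ) := by ring
      _ = 2 * M * cp * (N * (4 * M') ^ ((1-p)/p)) := by
          rw [hτdef, exp_eq hp0 h4M' hκ0 hNpos]
      _ ≤ C * N := by rw [hCN]; nlinarith [hNpos.le]
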